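/- Self-adjointness of the Dirac operator under the chirality boundary condition on the half-plane: let ψ = (f₁,g₁) and φ = (f₂,g₂) be compactly supported C¹ spinors on the closed upper half-plane satisfying the chirality boundary condition f₁ + g₁ = 0 and f₂ + g₂ = 0 on ∂ℝ²₊. Then on ∂ℝ²₊ one has pointwise ⟨n·ψ, φ⟩ = 0, where n = −e₂ is Clifford multiplication by the outward unit normal, and consequently ∫_{ℝ²₊} ⟨Dψ, φ⟩ dx = ∫_{ℝ²₊} ⟨ψ, Dφ⟩ dx. -/

import Mathlib

open MeasureTheory Real Filter Topology Set

noncomputable section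

/-- Euclidean norm on `ℝ × ℝ`. -/
def enorm2 (x : ℝ × ℝ) : ℝ := Real.sqrt (x.1 ^ 2 + x.2 ^ 2)

/-- Open disk `D_r` of radius `r` centered at the origin. -/
def Disk (r : ℝ) : Set (ℝ × ℝ) := {x | enorm2 x < r}

/-- Open upper half-disk `D⁺_r`. -/
def DiskP (r : ℝ) : Set (ℝ × ℝ) := {x | enorm2 x < r ∧ 0 < x.2}

/-- Boundary segment `L_r`. -/
def Lseg (r : ℝ) : Set (ℝ × ℝ) := {x | |x.1| < r ∧ x.2 = 0}

/-- The open upper half-plane `ℝ²₊`. -/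
def HalfPlane : Set (ℝ × ℝ) := {x | 0 < x.2}

def origin : ℝ × ℝ := (0, 0)

/-- Partial derivative in the first coordinate direction. -/
def pd1 {E : Type*} [NormedAddCommGroup E] [NormedSpace ℝ E] (f : ℝ × ℝ → E) (x : ℝ × ℝ) : E :=
  deriv (fun t => f (t, x.2)) x.1

/-- Partial derivative in the second coordinate direction. -/
def pd2 {E : Type*} [NormedAddCommGroup E] [NormedSpace ℝ E] (f : ℝ × ℝ → E) (x : ℝ × ℝ) : E :=
  deriv (fun t => f (x.1, t)) x.2

/-- The Laplacian on `ℝ²`. -/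
def lap (u : ℝ × ℝ → ℝ) (x : ℝ × ℝ) : ℝ := pd1 (pd1 u) x + pd2 (pd2 u) x

/-- A spinor on `ℝ²` is a map into `ℂ²`. -/
abbrev Spinor := ℝ × ℝ → ℂ × ℂ

/-- `|Ψ|² = |f|² + |g|²` for a spinor value `Ψ = (f,g)`. -/
def snormSq (a : ℂ × ℂ) : ℝ := Complex.normSq a.1 + Complex.normSq a.2

/-- Hermitian product on `ℂ²`. -/
def sprod (a b : ℂ × ℂ) : ℂ := a.1 * (starRingEnd ℂ) b.1 + a.2 * (starRingEnd ℂ) b.2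

/-- Wirtinger derivative `∂/∂z`. -/
def dz (f : ℝ × ℝ → ℂ) (x : ℝ × ℝ) : ℂ := (1 / 2 : ℂ) * (pd1 f x - Complex.I * pd2 f x)

/-- Wirtinger derivative `∂/∂z̄`. -/
def dzbar (f : ℝ × ℝ → ℂ) (x : ℝ × ℝ) : ℂ := (1 / 2 : ℂ) * (pd1 f x + Complex.I * pd2 f x)

/-- Dirac operator `DΨ = 2i (∂g/∂z, ∂f/∂z̄)` for `Ψ = (f,g)`. -/
def dirac (Ψ : Spinor) (x : ℝ × ℝ) : ℂ × ℂ :=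
  (2 * Complex.I * dz (fun y => (Ψ y).2) x, 2 * Complex.I * dzbar (fun y => (Ψ y).1) x)

/-- Clifford multiplication of a vector `y = (y₁,y₂)` on a spinor value,
given by the matrix `y₁ e₁ + y₂ e₂` with `e₁ = [[0,i],[i,0]]`, `e₂ = [[0,1],[-1,0]]`. -/
def cliff (y : ℝ × ℝ) (a : ℂ × ℂ) : ℂ × ℂ :=
  ((y.1 : ℂ) * Complex.I * a.2 + (y.2 : ℂ) * a.2,
   (y.1 : ℂ) * Complex.I * a.1 - (y.2 : ℂ) * a.1)

/-- The weight `V(x) |x|^α e^{u(x)}`. -/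
def Vw (α : ℝ) (V u : ℝ × ℝ → ℝ) (x : ℝ × ℝ) : ℝ :=
  V x * enorm2 x ^ α * Real.exp (u x)

/-- The boundary value problem (⋆) on `D⁺_r`: the super-Liouville equation coupled with the
Dirac equation in `D⁺_r`, the Neumann condition `∂u/∂n = c V |x|^α e^u` on `L_r`
(the outward normal derivative being `-∂/∂x₂`), and the chirality condition `BΨ = 0` on `L_r`. -/
def StarEqs (α c r : ℝ) (V : ℝ × ℝ → ℝ) (u : ℝ × ℝ → ℝ) (Ψ : Spinor) : Prop :=
  (∀ x ∈ DiskP r, -lap u x = 2 * (Vw α V u x) ^ 2 - Vw α V u x * snormSq (Ψ x)) ∧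
  (∀ x ∈ DiskP r, dirac Ψ x = (-(Vw α V u x)) • Ψ x) ∧
  (∀ x ∈ Lseg r, -pd2 u x = c * Vw α V u x) ∧
  (∀ x ∈ Lseg r, (Ψ x).1 + (Ψ x).2 = 0)

/-- Regularity of a solution: `u ∈ C²(D⁺_r) ∩ C¹(D⁺_r ∪ L_r)`, and the same for `Ψ`. -/
def RegularSolOn (r : ℝ) (u : ℝ × ℝ → ℝ) (Ψ : Spinor) : Prop :=
  ContDiffOn ℝ 2 u (DiskP r) ∧ ContDiffOn ℝ 1 u (DiskP r ∪ Lseg r) ∧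
  ContDiffOn ℝ 2 Ψ (DiskP r) ∧ ContDiffOn ℝ 1 Ψ (DiskP r ∪ Lseg r)

/-- The interior energy density `|x|^{2α} e^{2u} + |Ψ|⁴`. -/
def EnergyIntegrand (α : ℝ) (u : ℝ × ℝ → ℝ) (Ψ : Spinor) (x : ℝ × ℝ) : ℝ :=
  enorm2 x ^ (2 * α) * Real.exp (2 * u x) + (snormSq (Ψ x)) ^ 2

/-- The boundary energy density `|x|^α e^u` along `L_r`. -/
def BdryIntegrand (α : ℝ) (u : ℝ × ℝ → ℝ) (s : ℝ) : ℝ :=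
  |s| ^ α * Real.exp (u (s, 0))

/-- Uniform energy bound `∫_{D⁺_r}(|x|^{2α} e^{2u} + |Ψ|⁴) + ∫_{L_r}|x|^α e^u < C`. -/
def EnergyBound (α r C : ℝ) (u : ℝ × ℝ → ℝ) (Ψ : Spinor) : Prop :=
  IntegrableOn (EnergyIntegrand α u Ψ) (DiskP r) ∧
  IntegrableOn (fun s => BdryIntegrand α u s) (Set.Ioo (-r) r) ∧
  (∫ x in DiskP r, EnergyIntegrand α u Ψ x) +
    (∫ s in Set.Ioo (-r) r, BdryIntegrand α u s) < C

/-- `0 < a ≤ V ≤ b` on `s`. -/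
def VBounds (a b : ℝ) (V : ℝ × ℝ → ℝ) (s : Set (ℝ × ℝ)) : Prop :=
  0 < a ∧ ∀ x ∈ s, a ≤ V x ∧ V x ≤ b

/-- The blow-up set of a sequence of functions in the region `s`. -/
def BlowupSet (w : ℕ → ℝ × ℝ → ℝ) (s : Set (ℝ × ℝ)) : Set (ℝ × ℝ) :=
  {x ∈ s | ∃ y : ℕ → ℝ × ℝ, Tendsto y atTop (nhds x) ∧
    Tendsto (fun n => w n (y n)) atTop atTop}

/-!
With `F_y := ⟨y·ψ, φ⟩` (`cliffFlux y ψ φ`), the identity `D = e₁ ∂₁ + e₂ ∂₂` and the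
skew-adjointness of Clifford multiplication by vectors give
`∂₁ F_{e₁} + ∂₂ F_{e₂} = ⟨Dψ, φ⟩ - ⟨ψ, Dφ⟩` in the open half-plane. By the divergence theorem on a
large rectangle, the integral of the left side is minus the boundary integral of
`F_{e₂} = -⟨n·ψ, φ⟩`, and the chirality condition makes `⟨n·ψ, φ⟩`, indeed `⟨y·ψ, φ⟩` for every
normal vector `y`, vanish on `∂ℝ²₊`.
-/

theorem sprod_add_left (a b c : ℂ × ℂ) : sprod (a + b) c = sprod a c + sprod b c := by
  simp only [sprod, Prod.fst_add, Prod.snd_add]; ring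

theorem sprod_add_right (a b c : ℂ × ℂ) : sprod a (b + c) = sprod a b + sprod a c := by
  simp only [sprod, Prod.fst_add, Prod.snd_add, map_add]; ring

theorem sprod_cliff_left (y : ℝ × ℝ) (a b : ℂ × ℂ) :
    sprod (cliff y a) b = -sprod a (cliff y b) := by
  simp only [sprod, cliff, map_add, map_sub, map_mul, Complex.conj_ofReal, Complex.conj_I]; ring

theorem sprod_cliff_eq_zero_of_chirality {y : ℝ × ℝ} {a b : ℂ × ℂ} (hy : y.1 = 0)
    (ha : a.1 + a.2 = 0) (hb : b.1 + b.2 = 0) : sprod (cliff y a) b = 0 := by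
  have ha' : a.2 = -a.1 := by linear_combination ha
  have hb' : b.2 = -b.1 := by linear_combination hb
  simp only [sprod, cliff, hy, ha', hb', map_neg]; push_cast; ring

theorem continuous_cliff (y : ℝ × ℝ) : Continuous (cliff y) := by
  unfold cliff; fun_prop

theorem continuous_sprod : Continuous fun p : (ℂ × ℂ) × (ℂ × ℂ) => sprod p.1 p.2 := by
  unfold sprod; fun_prop

section Calculus

variable {E : Type*} [NormedAddCommGroup E] [NormedSpace ℝ E] {n : WithTop ℕ∞} {s : Set E}

theorem ContDiffOn.sprod {u v : E → ℂ × ℂ} (hu : ContDiffOn ℝ n u s) (hv : ContDiffOn ℝ n v s) :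
    ContDiffOn ℝ n (fun x => sprod (u x) (v x)) s := by
  have : ContDiff ℝ n (starRingEnd ℂ) := Complex.conjCLE.contDiff
  unfold _root_.sprod; fun_prop

theorem ContDiffOn.cliff {u : E → ℂ × ℂ} (y : ℝ × ℝ) (hu : ContDiffOn ℝ n u s) :
    ContDiffOn ℝ n (fun x => cliff y (u x)) s := by
  unfold _root_.cliff; fun_prop

end Calculus

theorem HasDerivAt.sprod {u v : ℝ → ℂ × ℂ} {u' v' : ℂ × ℂ} {t : ℝ} (hu : HasDerivAt u u' t)
    (hv : HasDerivAt v v' t) :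
    HasDerivAt (fun s => sprod (u s) (v s)) (sprod u' (v t) + sprod (u t) v') t := by
  have hu₁ := hasFDerivAt_fst.comp_hasDerivAt t hu
  have hu₂ := hasFDerivAt_snd.comp_hasDerivAt t hu
  have hv₁ := hasFDerivAt_fst.comp_hasDerivAt t hv
  have hv₂ := hasFDerivAt_snd.comp_hasDerivAt t hv
  refine ((hu₁.mul hv₁.star).add (hu₂.mul hv₂.star)).congr_deriv ?_
  simp only [_root_.sprod, starRingEnd_apply, Function.comp_apply, ContinuousLinearMap.coe_fst',
    ContinuousLinearMap.coe_snd']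
  ring

theorem HasDerivAt.cliff {u : ℝ → ℂ × ℂ} {u' : ℂ × ℂ} {t : ℝ} (y : ℝ × ℝ)
    (hu : HasDerivAt u u' t) : HasDerivAt (fun s => cliff y (u s)) (cliff y u') t := by
  have hu₁ := hasFDerivAt_fst.comp_hasDerivAt t hu
  have hu₂ := hasFDerivAt_snd.comp_hasDerivAt t hu
  exact ((hu₂.const_mul _).add (hu₂.const_mul _)).prodMk
    ((hu₁.const_mul _).sub (hu₁.const_mul _))

section Slices

variable {E : Type*} [NormedAddCommGroup E] [NormedSpace ℝ E] {f : ℝ × ℝ → E}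
  {L : ℝ × ℝ →L[ℝ] E} {x : ℝ × ℝ}

theorem HasFDerivAt.hasDerivAt_slice₁ (hf : HasFDerivAt f L x) :
    HasDerivAt (fun t => f (t, x.2)) (L (1, 0)) x.1 :=
  hf.comp_hasDerivAt x.1 ((hasDerivAt_id x.1).prodMk (hasDerivAt_const x.1 x.2))

theorem HasFDerivAt.hasDerivAt_slice₂ (hf : HasFDerivAt f L x) :
    HasDerivAt (fun t => f (x.1, t)) (L (0, 1)) x.2 :=
  hf.comp_hasDerivAt x.2 ((hasDerivAt_const x.2 x.1).prodMk (hasDerivAt_id x.2))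

theorem HasFDerivAt.pd1_eq (hf : HasFDerivAt f L x) : pd1 f x = L (1, 0) :=
  hf.hasDerivAt_slice₁.deriv

theorem HasFDerivAt.pd2_eq (hf : HasFDerivAt f L x) : pd2 f x = L (0, 1) :=
  hf.hasDerivAt_slice₂.deriv

end Slices

theorem HasFDerivAt.dirac_eq {Ψ : Spinor} {L : ℝ × ℝ →L[ℝ] ℂ × ℂ} {x : ℝ × ℝ}
    (hΨ : HasFDerivAt Ψ L x) : dirac Ψ x = cliff (1, 0) (L (1, 0)) + cliff (0, 1) (L (0, 1)) := by
  simp only [dirac, dz, dzbar, hΨ.fst.pd1_eq, hΨ.fst.pd2_eq, hΨ.snd.pd1_eq, hΨ.snd.pd2_eq]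
  ext <;> simp only [_root_.cliff, ContinuousLinearMap.comp_apply, ContinuousLinearMap.coe_fst',
    ContinuousLinearMap.coe_snd', Complex.ofReal_one, Complex.ofReal_zero, one_mul, zero_mul,
    add_zero, sub_zero, zero_add, zero_sub, Prod.mk_add_mk]
  · linear_combination (-(L (0, 1)).2) * Complex.I_sq
  · linear_combination (L (0, 1)).1 * Complex.I_sq

def cliffFlux (y : ℝ × ℝ) (ψ φ : Spinor) (x : ℝ × ℝ) : ℂ := sprod (cliff y (ψ x)) (φ x)

theorem ContDiffOn.cliffFlux {n : WithTop ℕ∞} {s : Set (ℝ × ℝ)} {ψ φ : Spinor} (y : ℝ × ℝ)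
    (hψ : ContDiffOn ℝ n ψ s) (hφ : ContDiffOn ℝ n φ s) :
    ContDiffOn ℝ n (_root_.cliffFlux y ψ φ) s :=
  (hψ.cliff y).sprod hφ

theorem HasCompactSupport.cliffFlux {φ : Spinor} (y : ℝ × ℝ) (ψ : Spinor)
    (hφ : HasCompactSupport φ) : HasCompactSupport (_root_.cliffFlux y ψ φ) :=
  hφ.mono' fun x hx => subset_tsupport φ fun h => hx (by simp [_root_.cliffFlux, sprod, h])

theorem pd1_add_pd2_cliffFlux {ψ φ : Spinor} {x : ℝ × ℝ} (hψ : DifferentiableAt ℝ ψ x)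
    (hφ : DifferentiableAt ℝ φ x) :
    pd1 (cliffFlux (1, 0) ψ φ) x + pd2 (cliffFlux (0, 1) ψ φ) x =
      sprod (dirac ψ x) (φ x) - sprod (ψ x) (dirac φ x) := by
  have hψ' := hψ.hasFDerivAt
  have hφ' := hφ.hasFDerivAt
  have h₁ : pd1 (cliffFlux (1, 0) ψ φ) x = _ :=
    ((hψ'.hasDerivAt_slice₁.cliff (1, 0)).sprod hφ'.hasDerivAt_slice₁).deriv
  have h₂ : pd2 (cliffFlux (0, 1) ψ φ) x = _ :=
    ((hψ'.hasDerivAt_slice₂.cliff (0, 1)).sprod hφ'.hasDerivAt_slice₂).deriv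
  rw [h₁, h₂, hψ'.dirac_eq, hφ'.dirac_eq, sprod_cliff_left _ (ψ x), sprod_cliff_left _ (ψ x),
    sprod_add_left, sprod_add_right]
  ring

def closedHalfPlane : Set (ℝ × ℝ) := {x | 0 ≤ x.2}

theorem isOpen_halfPlane : IsOpen HalfPlane := isOpen_lt continuous_const continuous_snd

theorem isClosed_closedHalfPlane : IsClosed closedHalfPlane :=
  isClosed_le continuous_const continuous_snd

theorem halfPlane_subset_closedHalfPlane : HalfPlane ⊆ closedHalfPlane :=
  fun _ hx => le_of_lt (show (0 : ℝ) < _ from hx)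

theorem closedHalfPlane_mem_nhds {x : ℝ × ℝ} (hx : x ∈ HalfPlane) : closedHalfPlane ∈ 𝓝 x :=
  mem_of_superset (isOpen_halfPlane.mem_nhds hx) halfPlane_subset_closedHalfPlane

theorem uniqueDiffOn_closedHalfPlane : UniqueDiffOn ℝ closedHalfPlane := by
  have h : closedHalfPlane = univ ×ˢ Ici (0 : ℝ) := by ext; simp [closedHalfPlane]
  rw [h]
  exact uniqueDiffOn_univ.prod (uniqueDiffOn_Ici 0)

theorem halfPlane_ae_eq_closedHalfPlane : HalfPlane =ᵐ[volume] closedHalfPlane := by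
  have hnull : volume ((univ : Set ℝ) ×ˢ ({0} : Set ℝ)) = 0 := by
    rw [Measure.volume_eq_prod, Measure.prod_prod, Real.volume_singleton, mul_zero]
  refine ae_eq_set.2 ⟨by simp [sdiff_eq_empty.2 halfPlane_subset_closedHalfPlane], ?_⟩
  refine measure_mono_null (fun x hx => ?_) hnull
  exact ⟨mem_univ _, le_antisymm (not_lt.1 hx.2) hx.1⟩

theorem Icc_subset_closedHalfPlane {a b : ℝ × ℝ} (ha : 0 ≤ a.2) : Icc a b ⊆ closedHalfPlane :=
  fun _ hx => ha.trans hx.1.2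

theorem setIntegral_closedHalfPlane_eq_setIntegral_Icc {E : Type*} [NormedAddCommGroup E]
    [NormedSpace ℝ E] {g : ℝ × ℝ → E} {R : ℝ} (hg : ∀ x ∈ closedHalfPlane, R ≤ ‖x‖ → g x = 0) :
    ∫ x in closedHalfPlane, g x = ∫ x in Icc ((-R, 0) : ℝ × ℝ) (R, R), g x := by
  refine setIntegral_eq_of_subset_of_forall_sdiff_eq_zero isClosed_closedHalfPlane.measurableSet
    (Icc_subset_closedHalfPlane le_rfl) fun x ⟨hx, hxR⟩ => hg x hx ?_
  rw [Prod.norm_def, Real.norm_eq_abs, Real.norm_eq_abs]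
  by_contra! h
  rw [max_lt_iff, abs_lt, abs_lt] at h
  exact hxR ⟨⟨h.1.1.le, hx⟩, h.1.2.le, h.2.2.le⟩

theorem intervalIntegral_eq_integral_of_forall_le_abs {E : Type*} [NormedAddCommGroup E]
    [NormedSpace ℝ E] {g : ℝ → E} {R : ℝ} (hR : 0 ≤ R) (hg : ∀ s, R ≤ |s| → g s = 0) :
    ∫ s in (-R)..R, g s = ∫ s, g s := by
  rw [intervalIntegral.integral_of_le (by linarith)]
  refine setIntegral_eq_integral_of_forall_compl_eq_zero fun s hs => hg s ?_
  rw [mem_Ioc, not_and_or, not_lt, not_le] at hs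
  rcases hs with h | h
  · exact le_abs.2 (Or.inr (by linarith))
  · exact le_abs.2 (Or.inl h.le)

theorem ContinuousOn.integrableOn_of_hasCompactSupport {X F : Type*} [TopologicalSpace X]
    [T2Space X] [MeasurableSpace X] [OpensMeasurableSpace X] {μ : Measure X}
    [IsFiniteMeasureOnCompacts μ] [NormedAddCommGroup F] {f : X → F} {s : Set X}
    (hf : ContinuousOn f s) (hs : IsClosed s) (hfs : HasCompactSupport f) :
    IntegrableOn f s μ :=
  ((hf.mono inter_subset_left).integrableOn_compact
    (hfs.isCompact.inter_left hs)).of_forall_sdiff_eq_zero hs.measurableSet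
    fun _ hx => image_eq_zero_of_notMem_tsupport fun h => hx.2 ⟨hx.1, h⟩

theorem integrableOn_halfPlane_of_eqOn {E : Type*} [NormedAddCommGroup E] {f g : ℝ × ℝ → E}
    (hg : ContinuousOn g closedHalfPlane) (hgs : HasCompactSupport g) (hfg : EqOn f g HalfPlane) :
    IntegrableOn f HalfPlane :=
  ((hg.integrableOn_of_hasCompactSupport isClosed_closedHalfPlane hgs).mono_set
    halfPlane_subset_closedHalfPlane).congr_fun hfg.symm isOpen_halfPlane.measurableSet

section HalfPlaneCalculus

variable {E : Type*} [NormedAddCommGroup E] [NormedSpace ℝ E] {F F₁ F₂ : ℝ × ℝ → E}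

theorem ContDiffOn.hasFDerivAt_of_mem_halfPlane (hF : ContDiffOn ℝ 1 F closedHalfPlane)
    {x : ℝ × ℝ} (hx : x ∈ HalfPlane) :
    HasFDerivAt F (fderivWithin ℝ F closedHalfPlane x) x := by
  have hmem := closedHalfPlane_mem_nhds hx
  rw [fderivWithin_of_mem_nhds hmem]
  exact ((hF.contDiffAt hmem).differentiableAt one_ne_zero).hasFDerivAt

theorem integral_Icc_divergence_of_forall_le_norm {R : ℝ} (hR : 0 < R)
    (h₁ : ContDiffOn ℝ 1 F₁ closedHalfPlane) (h₂ : ContDiffOn ℝ 1 F₂ closedHalfPlane)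
    (hzero : ∀ x : ℝ × ℝ, R ≤ ‖x‖ → F₁ x = 0 ∧ F₂ x = 0) :
    ∫ x in Icc ((-R, 0) : ℝ × ℝ) (R, R), (fderivWithin ℝ F₁ closedHalfPlane x (1, 0) +
        fderivWithin ℝ F₂ closedHalfPlane x (0, 1)) = -∫ s, F₂ (s, 0) := by
  have hbox : Icc ((-R, 0) : ℝ × ℝ) (R, R) ⊆ closedHalfPlane := Icc_subset_closedHalfPlane le_rfl
  have hdiv : ContinuousOn (fun x => fderivWithin ℝ F₁ closedHalfPlane x (1, 0) +
      fderivWithin ℝ F₂ closedHalfPlane x (0, 1)) closedHalfPlane :=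
    ((h₁.continuousOn_fderivWithin uniqueDiffOn_closedHalfPlane le_rfl).clm_apply
      continuousOn_const).add
      ((h₂.continuousOn_fderivWithin uniqueDiffOn_closedHalfPlane le_rfl).clm_apply
        continuousOn_const)
  have green := integral_divergence_prod_Icc_of_hasFDerivAt_off_countable_of_le F₁ F₂ _ _
    (-R, 0) (R, R) ⟨by simp [hR.le], hR.le⟩ ∅ countable_empty (h₁.continuousOn.mono hbox)
    (h₂.continuousOn.mono hbox) (fun x hx => h₁.hasFDerivAt_of_mem_halfPlane hx.1.2.1)
    (fun x hx => h₂.hasFDerivAt_of_mem_halfPlane hx.1.2.1) (hdiv.mono hbox).integrableOn_Icc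
  have bottom : ∫ s in (-R)..R, F₂ (s, 0) = ∫ s, F₂ (s, 0) :=
    intervalIntegral_eq_integral_of_forall_le_abs hR.le fun s hs =>
      (hzero _ (hs.trans (norm_fst_le (s, 0)))).2
  have top : ∀ s, F₂ (s, R) = 0 := fun s =>
    (hzero _ ((le_abs_self R).trans (norm_snd_le (s, R)))).2
  have right : ∀ y, F₁ (R, y) = 0 := fun y =>
    (hzero _ ((le_abs_self R).trans (norm_fst_le (R, y)))).1
  have left : ∀ y, F₁ (-R, y) = 0 := fun y =>
    (hzero _ (((le_abs_self R).trans_eq (abs_neg R).symm).trans (norm_fst_le (-R, y)))).1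
  rw [green, ← bottom]
  simp [top, right, left]

theorem integral_closedHalfPlane_divergence (h₁ : ContDiffOn ℝ 1 F₁ closedHalfPlane)
    (h₂ : ContDiffOn ℝ 1 F₂ closedHalfPlane) (hs₁ : HasCompactSupport F₁)
    (hs₂ : HasCompactSupport F₂) :
    ∫ x in closedHalfPlane, (fderivWithin ℝ F₁ closedHalfPlane x (1, 0) +
        fderivWithin ℝ F₂ closedHalfPlane x (0, 1)) = -∫ s, F₂ (s, 0) := by
  obtain ⟨R, hR, hsupp⟩ := (hs₁.isCompact.union hs₂.isCompact).isBounded.subset_ball_lt 0 0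
  have hout : ∀ x : ℝ × ℝ, R ≤ ‖x‖ → x ∉ tsupport F₁ ∧ x ∉ tsupport F₂ := fun x hx =>
    not_or.1 fun h => (mem_ball_zero_iff.1 (hsupp h)).not_ge hx
  have hoff : ∀ x ∈ closedHalfPlane, R ≤ ‖x‖ → fderivWithin ℝ F₁ closedHalfPlane x (1, 0) +
      fderivWithin ℝ F₂ closedHalfPlane x (0, 1) = 0 := fun x hx hRx => by
    have hU := uniqueDiffOn_closedHalfPlane x hx
    rw [(HasFDerivWithinAt.of_notMem_tsupport ℝ (hout x hRx).1).fderivWithin hU,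
      (HasFDerivWithinAt.of_notMem_tsupport ℝ (hout x hRx).2).fderivWithin hU]
    simp
  rw [setIntegral_closedHalfPlane_eq_setIntegral_Icc hoff]
  exact integral_Icc_divergence_of_forall_le_norm hR h₁ h₂ fun x hx =>
    ⟨image_eq_zero_of_notMem_tsupport (hout x hx).1,
      image_eq_zero_of_notMem_tsupport (hout x hx).2⟩

theorem integral_halfPlane_pd1_add_pd2 (h₁ : ContDiffOn ℝ 1 F₁ closedHalfPlane)
    (h₂ : ContDiffOn ℝ 1 F₂ closedHalfPlane) (hs₁ : HasCompactSupport F₁)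
    (hs₂ : HasCompactSupport F₂) :
    ∫ x in HalfPlane, (pd1 F₁ x + pd2 F₂ x) = -∫ s, F₂ (s, 0) := by
  calc ∫ x in HalfPlane, (pd1 F₁ x + pd2 F₂ x)
      = ∫ x in HalfPlane, (fderivWithin ℝ F₁ closedHalfPlane x (1, 0) +
          fderivWithin ℝ F₂ closedHalfPlane x (0, 1)) :=
        setIntegral_congr_fun (isOpen_halfPlane.measurableSet) fun x hx => by
          rw [(h₁.hasFDerivAt_of_mem_halfPlane hx).pd1_eq,
            (h₂.hasFDerivAt_of_mem_halfPlane hx).pd2_eq]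
    _ = ∫ x in closedHalfPlane, (fderivWithin ℝ F₁ closedHalfPlane x (1, 0) +
          fderivWithin ℝ F₂ closedHalfPlane x (0, 1)) :=
        setIntegral_congr_set halfPlane_ae_eq_closedHalfPlane
    _ = -∫ s, F₂ (s, 0) := integral_closedHalfPlane_divergence h₁ h₂ hs₁ hs₂

end HalfPlaneCalculus

/-- On `closedHalfPlane`, the continuous extension of `dirac` to the boundary by one-sided
derivatives. -/
def diracWithin (s : Set (ℝ × ℝ)) (Ψ : Spinor) (x : ℝ × ℝ) : ℂ × ℂ :=
  cliff (1, 0) (fderivWithin ℝ Ψ s x (1, 0)) + cliff (0, 1) (fderivWithin ℝ Ψ s x (0, 1))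

theorem ContDiffOn.continuousOn_diracWithin {Ψ : Spinor} (hΨ : ContDiffOn ℝ 1 Ψ closedHalfPlane) :
    ContinuousOn (diracWithin closedHalfPlane Ψ) closedHalfPlane := by
  have h := hΨ.continuousOn_fderivWithin uniqueDiffOn_closedHalfPlane le_rfl
  exact ((continuous_cliff _).comp_continuousOn (h.clm_apply continuousOn_const)).add
    ((continuous_cliff _).comp_continuousOn (h.clm_apply continuousOn_const))

theorem dirac_eq_diracWithin {Ψ : Spinor} (hΨ : ContDiffOn ℝ 1 Ψ closedHalfPlane) {x : ℝ × ℝ}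
    (hx : x ∈ HalfPlane) : dirac Ψ x = diracWithin closedHalfPlane Ψ x :=
  (hΨ.hasFDerivAt_of_mem_halfPlane hx).dirac_eq

theorem integrableOn_halfPlane_sprod_dirac_left {ψ φ : Spinor}
    (hψ : ContDiffOn ℝ 1 ψ closedHalfPlane) (hφ : ContinuousOn φ closedHalfPlane)
    (hφs : HasCompactSupport φ) :
    IntegrableOn (fun x => sprod (dirac ψ x) (φ x)) HalfPlane :=
  integrableOn_halfPlane_of_eqOn
    (continuous_sprod.comp_continuousOn (hψ.continuousOn_diracWithin.prodMk hφ))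
    (hφs.mono' fun x hx => subset_tsupport φ fun h => hx (by simp [sprod, h]))
    fun x hx => congrArg (sprod · (φ x)) (dirac_eq_diracWithin hψ hx)

theorem integrableOn_halfPlane_sprod_dirac_right {ψ φ : Spinor}
    (hψ : ContinuousOn ψ closedHalfPlane) (hψs : HasCompactSupport ψ)
    (hφ : ContDiffOn ℝ 1 φ closedHalfPlane) :
    IntegrableOn (fun x => sprod (ψ x) (dirac φ x)) HalfPlane :=
  integrableOn_halfPlane_of_eqOn
    (continuous_sprod.comp_continuousOn (hψ.prodMk hφ.continuousOn_diracWithin))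
    (hψs.mono' fun x hx => subset_tsupport ψ fun h => hx (by simp [sprod, h]))
    fun x hx => congrArg (sprod (ψ x)) (dirac_eq_diracWithin hφ hx)

/-- self-adjointness of the Dirac operator under the chirality boundary
condition on the half-plane: for compactly supported `C¹` spinors `ψ, φ` on the closed
upper half-plane with `Bψ = 0` and `Bφ = 0` on `∂ℝ²₊`, one has `⟨n·ψ, φ⟩ = 0` pointwise on
`∂ℝ²₊` (where `n = −e₂`), and `∫_{ℝ²₊} ⟨Dψ, φ⟩ = ∫_{ℝ²₊} ⟨ψ, Dφ⟩`. -/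
theorem dirac_self_adjoint_chirality
    (ψ φ : Spinor)
    (hψ : ContDiffOn ℝ 1 ψ {x : ℝ × ℝ | 0 ≤ x.2}) (hψs : HasCompactSupport ψ)
    (hφ : ContDiffOn ℝ 1 φ {x : ℝ × ℝ | 0 ≤ x.2}) (hφs : HasCompactSupport φ)
    (hBψ : ∀ x : ℝ × ℝ, x.2 = 0 → (ψ x).1 + (ψ x).2 = 0)
    (hBφ : ∀ x : ℝ × ℝ, x.2 = 0 → (φ x).1 + (φ x).2 = 0) :
    (∀ x : ℝ × ℝ, x.2 = 0 → sprod (cliff (0, -1) (ψ x)) (φ x) = 0) ∧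
    (∫ x in HalfPlane, sprod (dirac ψ x) (φ x)) =
      ∫ x in HalfPlane, sprod (ψ x) (dirac φ x) := by
  refine ⟨fun x hx => sprod_cliff_eq_zero_of_chirality rfl (hBψ x hx) (hBφ x hx),
    sub_eq_zero.1 ?_⟩
  rw [← integral_sub (integrableOn_halfPlane_sprod_dirac_left hψ hφ.continuousOn hφs)
    (integrableOn_halfPlane_sprod_dirac_right hψ.continuousOn hψs hφ)]
  calc ∫ x in HalfPlane, (sprod (dirac ψ x) (φ x) - sprod (ψ x) (dirac φ x))
      = ∫ x in HalfPlane, (pd1 (cliffFlux (1, 0) ψ φ) x + pd2 (cliffFlux (0, 1) ψ φ) x) :=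
        setIntegral_congr_fun isOpen_halfPlane.measurableSet fun x hx =>
          (pd1_add_pd2_cliffFlux (hψ.hasFDerivAt_of_mem_halfPlane hx).differentiableAt
            (hφ.hasFDerivAt_of_mem_halfPlane hx).differentiableAt).symm
    _ = -∫ s, cliffFlux (0, 1) ψ φ (s, 0) :=
        integral_halfPlane_pd1_add_pd2 (hψ.cliffFlux _ hφ) (hψ.cliffFlux _ hφ)
          (hφs.cliffFlux _ _) (hφs.cliffFlux _ _)
    _ = 0 := by
        have hbdry : ∀ s : ℝ, cliffFlux (0, 1) ψ φ (s, 0) = 0 := fun s =>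
          sprod_cliff_eq_zero_of_chirality rfl (hBψ (s, 0) rfl) (hBφ (s, 0) rfl)
        simp [hbdry]
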